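/- Let R be a Euclidean domain and > a global monomial ordering on the monomials of R[x₁,…,xₙ]. Let H ⊆ R[x₁,…,xₙ] be a finite set and let h, k ∈ H with h ≠ k be nonzero polynomials such that LM(k) divides LM(h). Suppose c := gcd(LC(h), LC(k)) is written as c = a·LC(h) + b·LC(k) with a, b ∈ R and a a unit of R, and set h' := a·h + b·(LM(h)/LM(k))·k. Then LM(h') = LM(h), LC(h') = c, and the ideal generated by (H \ {h}) ∪ {h'} equals the ideal generated by H. -/

import Mathlib

open MvPolynomial

variable {n : ℕ} {R : Type*} [EuclideanDomain R]

/-- The leading exponent of a polynomial w.r.t. a monomial order (leading exponent of 0 is 0). -/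
noncomputable def leadExp (m : MonomialOrder (Fin n)) (f : MvPolynomial (Fin n) R) :
    Fin n →₀ ℕ :=
  m.toSyn.symm (f.support.sup fun d => m.toSyn d)

/-- The leading coefficient. -/
noncomputable def leadCoeff (m : MonomialOrder (Fin n)) (f : MvPolynomial (Fin n) R) : R :=
  f.coeff (leadExp m f)

/-- The leading term. -/
noncomputable def leadTerm (m : MonomialOrder (Fin n)) (f : MvPolynomial (Fin n) R) :
    MvPolynomial (Fin n) R :=
  monomial (leadExp m f) (leadCoeff m f)

/-- The leading monomial, as an element of `WithBot m.syn`; `leadMon m 0 = ⊥`. -/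
noncomputable def leadMon (m : MonomialOrder (Fin n)) (f : MvPolynomial (Fin n) R) :
    WithBot m.syn :=
  f.support.sup fun d => (m.toSyn d : WithBot m.syn)

/-- The leading ideal of a set of polynomials. -/
noncomputable def leadIdeal (m : MonomialOrder (Fin n)) (S : Set (MvPolynomial (Fin n) R)) :
    Ideal (MvPolynomial (Fin n) R) :=
  Ideal.span (leadTerm m '' S)

/-- The S-polynomial. -/
noncomputable def spoly [DecidableEq R] (m : MonomialOrder (Fin n))
    (f g : MvPolynomial (Fin n) R) : MvPolynomial (Fin n) R :=
  monomial (leadExp m f ⊔ leadExp m g - leadExp m f)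
      (EuclideanDomain.lcm (leadCoeff m f) (leadCoeff m g) / leadCoeff m f) * f -
    monomial (leadExp m f ⊔ leadExp m g - leadExp m g)
      (EuclideanDomain.lcm (leadCoeff m f) (leadCoeff m g) / leadCoeff m g) * g

/-!
Since `LM k ∣ LM h`, the shifted multiple `b · (LM h / LM k) · k` has no monomial above `LM h`,
so the coefficient of `h'` at `LM h` is `a · LC h + b · LC k = gcd (LC h) (LC k) ≠ 0` and nothing
larger occurs. As `a` is a unit, `h = a⁻¹ · (h' - b · (LM h / LM k) · k)`, so exchanging `h` for
`h'` does not change the generated ideal.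
-/

theorem leadExp_eq_degree (m : MonomialOrder (Fin n)) (f : MvPolynomial (Fin n) R) :
    leadExp m f = m.degree f :=
  rfl

theorem leadCoeff_eq_leadingCoeff (m : MonomialOrder (Fin n)) (f : MvPolynomial (Fin n) R) :
    leadCoeff m f = m.leadingCoeff f :=
  rfl

namespace MonomialOrder

variable {σ S : Type*} [CommSemiring S] {m : MonomialOrder σ}

theorem degree_eq_of_degree_le_of_coeff_ne_zero {f : MvPolynomial σ S} {d : σ →₀ ℕ}
    (hle : m.degree f ≼[m] d) (hd : f.coeff d ≠ 0) : m.degree f = d :=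
  m.toSyn.injective (le_antisymm hle (m.le_degree (mem_support_iff.mpr hd)))

variable {f g : MvPolynomial σ S}

theorem degree_C_mul_add_monomial_mul_le (hgf : m.degree g ≤ m.degree f) (a b : S) :
    m.degree (C a * f + monomial (m.degree f - m.degree g) b * g) ≼[m] m.degree f := by
  have hCf : m.degree (C a * f) ≼[m] m.degree f := by
    simpa only [degree_C, map_zero, zero_add, map_add] using m.degree_mul_le (f := C a) (g := f)
  have hmg : m.degree (monomial (m.degree f - m.degree g) b * g) ≼[m] m.degree f := by
    calc m.toSyn (m.degree (monomial (m.degree f - m.degree g) b * g))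
        ≤ m.toSyn (m.degree (monomial (m.degree f - m.degree g) b)) + m.toSyn (m.degree g) := by
          simpa only [map_add] using m.degree_mul_le
      _ ≤ m.toSyn (m.degree f - m.degree g) + m.toSyn (m.degree g) := by
          gcongr; exact m.degree_monomial_le b
      _ = m.toSyn (m.degree f) := by rw [← map_add, tsub_add_cancel_of_le hgf]
  exact m.degree_add_le.trans (sup_le hCf hmg)

theorem coeff_degree_C_mul_add_monomial_mul (hgf : m.degree g ≤ m.degree f) (a b : S) :
    (C a * f + monomial (m.degree f - m.degree g) b * g).coeff (m.degree f) =
      a * m.leadingCoeff f + b * m.leadingCoeff g := by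
  rw [coeff_add, coeff_C_mul, coeff_monomial_mul', if_pos tsub_le_self,
    tsub_tsub_cancel_of_le hgf]
  rfl

theorem degree_C_mul_add_monomial_mul (hgf : m.degree g ≤ m.degree f) {a b : S}
    (hab : a * m.leadingCoeff f + b * m.leadingCoeff g ≠ 0) :
    m.degree (C a * f + monomial (m.degree f - m.degree g) b * g) = m.degree f :=
  degree_eq_of_degree_le_of_coeff_ne_zero (degree_C_mul_add_monomial_mul_le hgf a b)
    (by rwa [coeff_degree_C_mul_add_monomial_mul hgf])

theorem leadingCoeff_C_mul_add_monomial_mul (hgf : m.degree g ≤ m.degree f) {a b : S}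
    (hab : a * m.leadingCoeff f + b * m.leadingCoeff g ≠ 0) :
    m.leadingCoeff (C a * f + monomial (m.degree f - m.degree g) b * g) =
      a * m.leadingCoeff f + b * m.leadingCoeff g := by
  rw [leadingCoeff, degree_C_mul_add_monomial_mul hgf hab,
    coeff_degree_C_mul_add_monomial_mul hgf]

end MonomialOrder

theorem Submodule.span_diff_singleton_union_smul_add {A M : Type*} [Ring A] [AddCommGroup M]
    [Module A M] {s : Set M} {x y : M} {u : A} (hx : x ∈ s) (hu : IsUnit u)
    (hy : y ∈ span A (s \ {x})) :
    span A (s \ {x} ∪ {u • x + y}) = span A s := by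
  apply le_antisymm
  · rw [span_le]
    rintro z (hz | rfl)
    · exact subset_span hz.1
    · exact add_mem (smul_mem _ _ (subset_span hx)) (span_mono Set.sdiff_subset hy)
  · rw [span_le]
    intro z hz
    by_cases hzx : z = x
    · subst hzx
      have hmem : (hu.unit⁻¹ : Aˣ) • (u • z + y - y) ∈ span A (s \ {z} ∪ {u • z + y}) :=
        smul_mem _ _ (sub_mem (subset_span (Or.inr rfl)) (span_mono Set.subset_union_left hy))
      rwa [add_sub_cancel_right, Units.smul_def, smul_smul, IsUnit.val_inv_mul, one_smul] at hmem
    · exact subset_span (Or.inl ⟨hz, hzx⟩)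

theorem interreduce_step_gcd_general
    {n : ℕ} {R : Type*} [EuclideanDomain R] [DecidableEq R]
    (m : MonomialOrder (Fin n))
    (H : Finset (MvPolynomial (Fin n) R))
    (h k : MvPolynomial (Fin n) R) (hh : h ∈ H) (hk : k ∈ H) (hne : h ≠ k)
    (hh0 : h ≠ 0)
    (hdvd : leadExp m k ≤ leadExp m h)
    (a b : R) (ha : IsUnit a)
    (hab : EuclideanDomain.gcd (leadCoeff m h) (leadCoeff m k) =
      a * leadCoeff m h + b * leadCoeff m k)
    (h' : MvPolynomial (Fin n) R)
    (hh' : h' = C a * h + C b * monomial (leadExp m h - leadExp m k) 1 * k) :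
    leadExp m h' = leadExp m h ∧
    leadCoeff m h' = EuclideanDomain.gcd (leadCoeff m h) (leadCoeff m k) ∧
    Ideal.span ((H : Set (MvPolynomial (Fin n) R)) \ {h} ∪ {h'}) =
      Ideal.span (H : Set (MvPolynomial (Fin n) R)) := by
  simp only [leadExp_eq_degree, leadCoeff_eq_leadingCoeff] at hdvd hab hh' ⊢
  have hgcd : a * m.leadingCoeff h + b * m.leadingCoeff k ≠ 0 := by
    rw [← hab, Ne, EuclideanDomain.gcd_eq_zero_iff, not_and_or]
    exact Or.inl (m.leadingCoeff_ne_zero_iff.mpr hh0)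
  have hh'_eq : h' = C a * h + monomial (m.degree h - m.degree k) b * k := by
    rw [hh', C_mul_monomial, mul_one]
  refine ⟨?_, ?_, ?_⟩
  · rw [hh'_eq, m.degree_C_mul_add_monomial_mul hdvd hgcd]
  · rw [hh'_eq, m.leadingCoeff_C_mul_add_monomial_mul hdvd hgcd, hab]
  · rw [hh'_eq]
    exact Submodule.span_diff_singleton_union_smul_add hh (ha.map C)
      (Ideal.mul_mem_left _ _ (Ideal.subset_span ⟨hk, hne.symm⟩))

/-- One gcd step in `Interreduce`: if `h ≠ k` are nonzero elements of a finite set `H` with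
`LM k ∣ LM h`, and `gcd(LC h, LC k) = a * LC h + b * LC k` with `a` a unit, then for
`h' = a * h + b * (LM h / LM k) * k` we have `LM h' = LM h`, `LC h' = gcd(LC h, LC k)`,
and the ideal generated by `(H \ {h}) ∪ {h'}` equals the ideal generated by `H`. -/
theorem interreduce_step_gcd
    {n : ℕ} {R : Type*} [EuclideanDomain R] [DecidableEq R]
    (m : MonomialOrder (Fin n))
    (H : Finset (MvPolynomial (Fin n) R))
    (h k : MvPolynomial (Fin n) R) (hh : h ∈ H) (hk : k ∈ H) (hne : h ≠ k)
    (hh0 : h ≠ 0) (hk0 : k ≠ 0)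
    (hdvd : leadExp m k ≤ leadExp m h)
    (a b : R) (ha : IsUnit a)
    (hab : EuclideanDomain.gcd (leadCoeff m h) (leadCoeff m k) =
      a * leadCoeff m h + b * leadCoeff m k)
    (h' : MvPolynomial (Fin n) R)
    (hh' : h' = C a * h + C b * monomial (leadExp m h - leadExp m k) 1 * k) :
    leadExp m h' = leadExp m h ∧
    leadCoeff m h' = EuclideanDomain.gcd (leadCoeff m h) (leadCoeff m k) ∧
    Ideal.span ((H : Set (MvPolynomial (Fin n) R)) \ {h} ∪ {h'}) =
      Ideal.span (H : Set (MvPolynomial (Fin n) R)) :=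
  interreduce_step_gcd_general m H h k hh hk hne hh0 hdvd a b ha hab h' hh'
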